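/- Let $Q \subseteq \mathbb{R}^d$ be a cube, $r \in [1,\infty)$, $s \in (0,1)$, and $f \in F^s_{1,r}(Q)$. Then for almost every $x \in Q$, $\Big(\int_Q \frac{|f(x)-f(y)|^r}{|x-y|^{d+sr}}dy\Big)^{1/r} \le C_d\Big[\Big(\sum_{R\in\mathcal{D}(Q)} \ell(R)^{-sr}|f(x)-\langle f\rangle_R|^r\mathbf{1}_R(x)\Big)^{1/r} + \Big(\sum_{R\in\mathcal{D}(Q)} \ell(R)^{-sr}\langle|f-\langle f\rangle_{3R}|\rangle_{r,3R}^r\,\mathbf{1}_R(x)\Big)^{1/r}\Big]$ with $C_d$ depending only on $d$. -/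

import Mathlib

/-!
Fix `x ∈ Q` and let `Q_j ∋ x` be its dyadic cube of generation `j`. The shells
`{y ∈ Q ∩ 3Q_j : |x - y| > ℓ(Q_j)/2}` cover `Q \ {x}`; on the `j`-th one the kernel is at most
`(ℓ(Q_j)/2)^{-d-sr}` and `|3Q_j| = 3^d ℓ(Q_j)^d`, so the shell contributes
`≲ ℓ(Q_j)^{-sr} ⨍_{3Q_j} |f(x) - f|^r`, with `f` extended to `3Q_j` by reflection (which does not
change `f` on `Q`). Splitting `f(x) - f(y)` through `⟨f⟩_{Q_j}` and `⟨f⟩_{3Q_j}`, and bounding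
`|⟨f⟩_{Q_j} - ⟨f⟩_{3Q_j}|^r ≤ 3^d ⨍_{3Q_j} |f - ⟨f⟩_{3Q_j}|^r` by Jensen, each shell is
`≲ ℓ(Q_j)^{-sr} (|f(x) - ⟨f⟩_{Q_j}|^r + ⟨f - ⟨f⟩_{3Q_j}⟩_{r,3Q_j}^r)`. Sum over `j` and use
`(a + b)^{1/r} ≤ a^{1/r} + b^{1/r}`; the constant comes out as `16 · 18^d`.
-/

open MeasureTheory
open scoped ENNReal NNReal

noncomputable section

abbrev Euc (d : ℕ) := EuclideanSpace ℝ (Fin d)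

structure Cube (d : ℕ) where
  center : Euc d
  side : ℝ
  side_pos : 0 < side

namespace Cube

variable {d : ℕ}

/-- A (half-open) axis-parallel cube in `ℝ^d`. -/
def toSet (Q : Cube d) : Set (Euc d) :=
  {x | ∀ i, Q.center i - Q.side / 2 ≤ x i ∧ x i < Q.center i + Q.side / 2}

/-- The volume `|Q| = ℓ(Q)^d` of a cube. -/
def vol (Q : Cube d) : ℝ := Q.side ^ d

/-- The average `⟨f⟩_Q = |Q|⁻¹ ∫_Q f`. -/
def avg (Q : Cube d) (f : Euc d → ℝ) : ℝ := Q.vol⁻¹ * ∫ x in Q.toSet, f x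

/-- The `ℝ≥0∞`-valued average of a nonnegative function. -/
def elavg (Q : Cube d) (g : Euc d → ℝ≥0∞) : ℝ≥0∞ :=
  (∫⁻ x in Q.toSet, g x) / ENNReal.ofReal Q.vol

/-- The `L^t`-average `⟨f⟩_{t,Q} = (|Q|⁻¹ ∫_Q |f|^t)^{1/t}`, with the
essential supremum when `t = ∞`. -/
def lavg (Q : Cube d) (t : ℝ≥0∞) (f : Euc d → ℝ) : ℝ≥0∞ :=
  if t = ⊤ then essSup (fun x => ENNReal.ofReal |f x|) (volume.restrict Q.toSet)
  else ((∫⁻ x in Q.toSet, ENNReal.ofReal |f x| ^ t.toReal) / ENNReal.ofReal Q.vol) ^ (1 / t.toReal)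

/-- The concentric dilation `γ Q` of a cube (only intended for `γ ≥ 1`). -/
def scale (γ : ℝ) (Q : Cube d) : Cube d :=
  ⟨Q.center, max γ 1 * Q.side,
    mul_pos (lt_of_lt_of_le one_pos (le_max_right γ 1)) Q.side_pos⟩

/-- The dyadic subcube of `Q` of generation `j` with index `k`. -/
def dyadicSub (Q : Cube d) (j : ℕ) (k : Fin d → ℕ) : Cube d where
  center := WithLp.toLp 2 fun i => Q.center i - Q.side / 2 + ((k i : ℝ) + 1 / 2) * (Q.side / 2 ^ j)
  side := Q.side / 2 ^ j
  side_pos := div_pos Q.side_pos (by positivity)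

/-- The `2ℓ(Q)`-periodic even reflection map: `reflect Q x ∈ Q` and functions
defined on `Q` are extended outside `Q` by precomposing with `reflect Q`. -/
def reflect (Q : Cube d) (x : Euc d) : Euc d := WithLp.toLp 2 fun i =>
  (Q.center i - Q.side / 2) + Q.side -
    |(x i - (Q.center i - Q.side / 2) -
        2 * Q.side * ((⌊(x i - (Q.center i - Q.side / 2)) / (2 * Q.side)⌋ : ℤ) : ℝ)) - Q.side|

end Cube

/-- `R` is a dyadic subcube of `Q`. -/
def IsDyadicSub {d : ℕ} (Q R : Cube d) : Prop :=
  ∃ (j : ℕ) (k : Fin d → ℕ), (∀ i, k i < 2 ^ j) ∧ R = Q.dyadicSub j k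

/-- A collection of cubes is sparse if each `R` carries a subset `E R ⊆ R`
with `|E R| ≥ |R|/2`, the sets `E R` being pairwise disjoint. -/
def IsSparse {d : ℕ} (𝒮 : Set (Cube d)) : Prop :=
  ∃ E : Cube d → Set (Euc d),
    (∀ R ∈ 𝒮, MeasurableSet (E R) ∧ E R ⊆ R.toSet ∧
      ENNReal.ofReal R.vol ≤ 2 * volume (E R)) ∧
    𝒮.Pairwise fun R R' => Disjoint (E R) (E R')

/-- The Hölder conjugate `p'` of `p`, as an extended real exponent. -/
def conjE (p : ℝ) : ℝ≥0∞ := if p = 1 then ⊤ else ENNReal.ofReal (p / (p - 1))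

/-- The two-weight Muckenhoupt characteristic
`[ω,σ]_{A^α_{p,q}(Q)} = sup_{R ⊆ Q} |R|^α ⟨ω⟩_{q,R} ⟨σ⁻¹⟩_{p',R}`. -/
def muck {d : ℕ} (Q : Cube d) (p q α : ℝ) (ω σ : Euc d → ℝ) : ℝ≥0∞ :=
  ⨆ R : {R : Cube d // R.toSet ⊆ Q.toSet},
    ENNReal.ofReal (R.1.vol ^ α) * R.1.lavg (ENNReal.ofReal q) ω *
      R.1.lavg (conjE p) fun x => (σ x)⁻¹

/-- The classical Muckenhoupt `A_p` characteristic
`[w]_{A_p} = sup_Q ⟨w⟩_{1,Q} ⟨w⁻¹⟩_{1/(p-1),Q}` over all cubes in `ℝ^d`. -/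
def apChar (d : ℕ) (p : ℝ) (w : Euc d → ℝ) : ℝ≥0∞ :=
  ⨆ R : Cube d,
    R.lavg 1 w * R.lavg (if p = 1 then ⊤ else ENNReal.ofReal (1 / (p - 1))) fun x => (w x)⁻¹

/-- The localized maximal function `M(w 1_R)(x) = sup_{S ⊆ R, x ∈ S} ⟨w⟩_{1,S}`. -/
def locMaxFn {d : ℕ} (R : Cube d) (w : Euc d → ℝ) (x : Euc d) : ℝ≥0∞ :=
  ⨆ S : {S : Cube d // S.toSet ⊆ R.toSet ∧ x ∈ S.toSet}, S.1.lavg 1 w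

/-- The local Fujii–Wilson `A_∞(Q)` characteristic. -/
def ainf {d : ℕ} (Q : Cube d) (w : Euc d → ℝ) : ℝ≥0∞ :=
  ⨆ R : {R : Cube d // R.toSet ⊆ Q.toSet},
    (∫⁻ x in R.1.toSet, locMaxFn R.1 w x) / ∫⁻ x in R.1.toSet, ENNReal.ofReal (w x)

/-- The weighted norm `‖g‖_{L^p_σ(A)} = (∫_A |g|^p σ^p)^{1/p}` (weight as multiplier). -/
def wLp {d : ℕ} (A : Set (Euc d)) (p : ℝ) (σ g : Euc d → ℝ) : ℝ≥0∞ :=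
  (∫⁻ x in A, ENNReal.ofReal (|g x| * σ x) ^ p) ^ (1 / p)

/-- The fractional difference quotient
`f^{s,r}_A(x) = (∫_A |f(x)-f(y)|^r / |x-y|^{d+sr} dy)^{1/r}`. -/
def fsr {d : ℕ} (A : Set (Euc d)) (s r : ℝ) (f : Euc d → ℝ) (x : Euc d) : ℝ≥0∞ :=
  (∫⁻ y in A, ENNReal.ofReal |f x - f y| ^ r / edist x y ^ ((d : ℝ) + s * r)) ^ (1 / r)

/-- `f^{s,r}_{3R}`, where `f` is extended outside `Q` by periodic reflection. -/
def fsr3 {d : ℕ} (Q : Cube d) (s r : ℝ) (f : Euc d → ℝ) (R : Cube d) (x : Euc d) : ℝ≥0∞ :=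
  fsr (Cube.scale 3 R).toSet s r (fun y => f (Q.reflect y)) x

/-- The weighted weak norm `‖g‖_{L^{q,∞}_ω(Q)}` of an `ℝ≥0∞`-valued function. -/
def weakNE {d : ℕ} (Q : Cube d) (q : ℝ) (ω : Euc d → ℝ) (g : Euc d → ℝ≥0∞) : ℝ≥0∞ :=
  ⨆ lam : ℝ≥0, (lam : ℝ≥0∞) *
    (∫⁻ x in Q.toSet ∩ {x | (lam : ℝ≥0∞) < g x}, ENNReal.ofReal (ω x) ^ q) ^ (1 / q)

/-- The weighted weak norm `‖g‖_{L^{q,∞}_ω(Q)}` of a real valued function. -/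
def weakN {d : ℕ} (Q : Cube d) (q : ℝ) (ω g : Euc d → ℝ) : ℝ≥0∞ :=
  weakNE Q q ω fun x => ENNReal.ofReal |g x|

/-- The weighted Triebel–Lizorkin seminorm `[u]_{F^{s,σ}_{p,r}(Q)}`. -/
def fSemi {d : ℕ} (Q : Cube d) (p r s : ℝ) (σ u : Euc d → ℝ) : ℝ≥0∞ :=
  (∫⁻ x in Q.toSet, fsr Q.toSet s r u x ^ p * ENNReal.ofReal (σ x) ^ p) ^ (1 / p)

theorem rpow_laverage_le_laverage_rpow {α : Type*} [MeasurableSpace α] {μ : Measure α}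
    [IsFiniteMeasure μ] {g : α → ℝ≥0∞} (hg : AEMeasurable g μ) {r : ℝ} (hr : 1 ≤ r) :
    (⨍⁻ a, g a ∂μ) ^ r ≤ ⨍⁻ a, g a ^ r ∂μ := by
  have hr₀ : 0 < r := zero_lt_one.trans_le hr
  rcases eq_zero_or_neZero μ with rfl | _
  · simp [ENNReal.zero_rpow_of_pos hr₀]
  -- Hölder's `‖g‖₁ ≤ ‖g‖ᵣ` for the normalized (probability) measure.
  have h := eLpNorm'_le_eLpNorm'_mul_rpow_measure_univ (μ := (μ Set.univ)⁻¹ • μ) one_pos hr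
    (hg.smul_measure _).aestronglyMeasurable
  simp only [eLpNorm', enorm_eq_self, ENNReal.rpow_one, div_one, measure_univ, ENNReal.one_rpow,
    mul_one] at h
  calc (⨍⁻ a, g a ∂μ) ^ r ≤ ((∫⁻ a, g a ^ r ∂(μ Set.univ)⁻¹ • μ) ^ (1 / r)) ^ r :=
        ENNReal.rpow_le_rpow h hr₀.le
    _ = ⨍⁻ a, g a ^ r ∂μ := by
        rw [← ENNReal.rpow_mul, one_div_mul_cancel hr₀.ne', ENNReal.rpow_one, laverage_eq']

theorem ENNReal.ofReal_abs_sub_rpow_le (u a b : ℝ) {r : ℝ} (hr : 1 ≤ r) :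
    ENNReal.ofReal |u - a| ^ r ≤
      2 ^ r * (ENNReal.ofReal |a - b| ^ r + ENNReal.ofReal |u - b| ^ r) := by
  have htri : ENNReal.ofReal |u - a| ≤ ENNReal.ofReal |a - b| + ENNReal.ofReal |u - b| := by
    rw [← ENNReal.ofReal_add (abs_nonneg _) (abs_nonneg _)]
    exact ENNReal.ofReal_le_ofReal
      ((abs_sub_le u b a).trans_eq (by rw [abs_sub_comm b a, add_comm]))
  calc ENNReal.ofReal |u - a| ^ r
      ≤ (ENNReal.ofReal |a - b| + ENNReal.ofReal |u - b|) ^ r := by gcongr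
    _ ≤ 2 ^ (r - 1) * (ENNReal.ofReal |a - b| ^ r + ENNReal.ofReal |u - b| ^ r) :=
      ENNReal.rpow_add_le_mul_rpow_add_rpow _ _ hr
    _ ≤ 2 ^ r * (ENNReal.ofReal |a - b| ^ r + ENNReal.ofReal |u - b| ^ r) := by
      gcongr
      · exact one_le_two
      · linarith

theorem setLIntegral_abs_sub_rpow_le {α : Type*} [MeasurableSpace α] (μ : Measure α) (s : Set α)
    (u : α → ℝ) (a b : ℝ) {r : ℝ} (hr : 1 ≤ r) :
    ∫⁻ y in s, ENNReal.ofReal |u y - a| ^ r ∂μ ≤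
      2 ^ r * (ENNReal.ofReal |a - b| ^ r * μ s + ∫⁻ y in s, ENNReal.ofReal |u y - b| ^ r ∂μ) := by
  calc ∫⁻ y in s, ENNReal.ofReal |u y - a| ^ r ∂μ
      ≤ ∫⁻ y in s, 2 ^ r * (ENNReal.ofReal |a - b| ^ r + ENNReal.ofReal |u y - b| ^ r) ∂μ :=
        lintegral_mono fun y => ENNReal.ofReal_abs_sub_rpow_le _ _ _ hr
    _ = _ := by
      rw [lintegral_const_mul' _ _ (by simp), lintegral_add_left measurable_const,
        setLIntegral_const]

theorem ENNReal.inv_ofReal_half_rpow_mul_pow {ℓ : ℝ} (hℓ : 0 < ℓ) (n : ℕ) {t : ℝ} (ht : 0 ≤ t) :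
    (ENNReal.ofReal (ℓ / 2) ^ ((n : ℝ) + t))⁻¹ * ENNReal.ofReal ℓ ^ n =
      2 ^ ((n : ℝ) + t) * ENNReal.ofReal ℓ ^ (-t) := by
  have hL₀ : ENNReal.ofReal ℓ ≠ 0 := by simpa using hℓ
  rw [ENNReal.ofReal_div_of_pos two_pos, ENNReal.ofReal_ofNat,
    ENNReal.div_rpow_of_nonneg _ _ (by positivity), ENNReal.inv_div (by simp) (by simp),
    div_eq_mul_inv, ← ENNReal.rpow_neg, mul_assoc, ← ENNReal.rpow_natCast,
    ← ENNReal.rpow_add _ _ hL₀ ENNReal.ofReal_ne_top]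
  ring_nf

theorem setLIntegral_le_tsum_of_diff_singleton_subset {α : Type*} [MeasurableSpace α]
    [MeasurableSingletonClass α] {μ : Measure α} {g : α → ℝ≥0∞} {s : Set α} {t : ℕ → Set α}
    {x : α} (hgx : g x = 0) (hst : s \ {x} ⊆ ⋃ j, t j) :
    ∫⁻ y in s, g y ∂μ ≤ ∑' j, ∫⁻ y in t j, g y ∂μ :=
  calc ∫⁻ y in s, g y ∂μ ≤ ∫⁻ y in {x} ∪ ⋃ j, t j, g y ∂μ :=
        lintegral_mono_set ((Set.subset_insert_sdiff_singleton x s).trans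
          (Set.insert_subset_insert hst))
    _ ≤ ∫⁻ y in {x}, g y ∂μ + ∫⁻ y in ⋃ j, t j, g y ∂μ := lintegral_union_le _ _ _
    _ ≤ ∑' j, ∫⁻ y in t j, g y ∂μ := by
      rw [lintegral_singleton, hgx, zero_mul, zero_add]
      exact lintegral_iUnion_le _ _

namespace Cube

variable {d : ℕ}

theorem toSet_eq_preimage_pi (R : Cube d) :
    R.toSet = (MeasurableEquiv.toLp 2 (Fin d → ℝ)).symm ⁻¹'
      Set.univ.pi fun i => Set.Ico (R.center i - R.side / 2) (R.center i + R.side / 2) := by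
  ext x
  simp [toSet]

theorem measurableSet_toSet (R : Cube d) : MeasurableSet R.toSet := by
  rw [toSet_eq_preimage_pi]
  exact (MeasurableSet.univ_pi fun _ => measurableSet_Ico).preimage (MeasurableEquiv.measurable _)

theorem volume_toSet (R : Cube d) : volume R.toSet = ENNReal.ofReal R.side ^ d := by
  rw [toSet_eq_preimage_pi,
    (EuclideanSpace.volume_preserving_symm_measurableEquiv_toLp (Fin d)).measure_preimage
      (MeasurableSet.univ_pi fun _ => measurableSet_Ico).nullMeasurableSet, volume_pi_pi]
  simp [Real.volume_Ico]

theorem elavg_eq_setLAverage (R : Cube d) (g : Euc d → ℝ≥0∞) :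
    R.elavg g = ⨍⁻ x in R.toSet, g x ∂volume := by
  rw [laverage_eq, Measure.restrict_apply_univ, volume_toSet, elavg, vol,
    ENNReal.ofReal_pow R.side_pos.le]

theorem reflect_of_mem {Q : Cube d} {x : Euc d} (hx : x ∈ Q.toSet) : Q.reflect x = x := by
  ext i
  obtain ⟨h₁, h₂⟩ := hx i
  have hfloor : ⌊(x i - (Q.center i - Q.side / 2)) / (2 * Q.side)⌋ = 0 := by
    rw [Int.floor_eq_zero_iff, Set.mem_Ico, div_lt_one (by linarith [Q.side_pos])]
    exact ⟨div_nonneg (by linarith) (by linarith [Q.side_pos]), by linarith [Q.side_pos]⟩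
  simp only [reflect, hfloor, Int.cast_zero, mul_zero, sub_zero]
  rw [abs_of_nonpos (by linarith)]
  ring

theorem eqOn_comp_reflect {Q R : Cube d} (hRQ : R.toSet ⊆ Q.toSet) (f : Euc d → ℝ) :
    Set.EqOn (fun y => f (Q.reflect y)) f R.toSet := fun _ hy => by
  simp only [reflect_of_mem (hRQ hy)]

theorem scale_side {γ : ℝ} (hγ : 1 ≤ γ) (R : Cube d) : (scale γ R).side = γ * R.side := by
  simp [scale, max_eq_left hγ]

theorem mem_scale {γ : ℝ} (hγ : 1 ≤ γ) {R : Cube d} {x y : Euc d} (hx : x ∈ R.toSet)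
    (hxy : ∀ i, |y i - x i| ≤ (γ - 1) / 2 * R.side) : y ∈ (scale γ R).toSet := by
  intro i
  obtain ⟨h₁, h₂⟩ := hx i
  obtain ⟨h₃, h₄⟩ := abs_le.mp (hxy i)
  simp only [scale_side hγ]
  exact ⟨by simp only [scale]; linarith, by simp only [scale]; linarith⟩

theorem toSet_subset_scale {γ : ℝ} (hγ : 1 ≤ γ) (R : Cube d) :
    R.toSet ⊆ (scale γ R).toSet := fun x hx =>
  mem_scale hγ hx fun i => by
    rw [sub_self, abs_zero]; exact mul_nonneg (by linarith) R.side_pos.le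

theorem volume_scale (γ : ℝ) (hγ : 1 ≤ γ) (R : Cube d) :
    volume (scale γ R).toSet = ENNReal.ofReal γ ^ d * ENNReal.ofReal R.side ^ d := by
  rw [volume_toSet, scale_side hγ, ENNReal.ofReal_mul (by linarith), mul_pow]

theorem mem_dyadicSub_iff {Q : Cube d} {j : ℕ} {k : Fin d → ℕ} {y : Euc d} :
    y ∈ (Q.dyadicSub j k).toSet ↔ ∀ i,
      Q.center i - Q.side / 2 + k i * (Q.side / 2 ^ j) ≤ y i ∧
        y i < Q.center i - Q.side / 2 + (k i + 1) * (Q.side / 2 ^ j) := by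
  refine forall_congr' fun i => ?_
  simp only [dyadicSub]
  constructor <;> rintro ⟨h₁, h₂⟩ <;> constructor <;> linarith

theorem dyadicSub_subset {Q : Cube d} {j : ℕ} {k : Fin d → ℕ} (hk : ∀ i, k i < 2 ^ j) :
    (Q.dyadicSub j k).toSet ⊆ Q.toSet := by
  intro y hy i
  obtain ⟨h₁, h₂⟩ := mem_dyadicSub_iff.mp hy i
  have hk' : (k i : ℝ) + 1 ≤ 2 ^ j := by exact_mod_cast hk i
  have hh : 0 < Q.side / 2 ^ j := div_pos Q.side_pos (by positivity)
  have hside : (2 : ℝ) ^ j * (Q.side / 2 ^ j) = Q.side := by field_simp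
  constructor <;> nlinarith

def dyadicIndex (Q : Cube d) (j : ℕ) (x : Euc d) (i : Fin d) : ℕ :=
  ⌊(x i - (Q.center i - Q.side / 2)) / (Q.side / 2 ^ j)⌋₊

theorem dyadicIndex_lt {Q : Cube d} {x : Euc d} (hx : x ∈ Q.toSet) (j : ℕ) (i : Fin d) :
    Q.dyadicIndex j x i < 2 ^ j := by
  have hh : 0 < Q.side / 2 ^ j := div_pos Q.side_pos (by positivity)
  have hside : (2 : ℝ) ^ j * (Q.side / 2 ^ j) = Q.side := by field_simp
  rw [dyadicIndex, Nat.floor_lt (div_nonneg (by linarith [(hx i).1]) hh.le), div_lt_iff₀ hh]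
  push_cast
  linarith [(hx i).2]

theorem mem_dyadicSub_dyadicIndex {Q : Cube d} {x : Euc d} (hx : x ∈ Q.toSet) (j : ℕ) :
    x ∈ (Q.dyadicSub j (Q.dyadicIndex j x)).toSet := by
  refine mem_dyadicSub_iff.mpr fun i => ?_
  have hh : 0 < Q.side / 2 ^ j := div_pos Q.side_pos (by positivity)
  have ht : 0 ≤ (x i - (Q.center i - Q.side / 2)) / (Q.side / 2 ^ j) :=
    div_nonneg (by linarith [(hx i).1]) hh.le
  have h₁ := Nat.floor_le ht
  have h₂ := Nat.lt_floor_add_one ((x i - (Q.center i - Q.side / 2)) / (Q.side / 2 ^ j))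
  rw [le_div_iff₀ hh] at h₁
  rw [div_lt_iff₀ hh] at h₂
  exact ⟨by rw [dyadicIndex]; linarith, by rw [dyadicIndex]; linarith⟩

theorem enorm_avg_le (R : Cube d) (g : Euc d → ℝ) :
    ‖R.avg g‖ₑ ≤ ⨍⁻ y in R.toSet, ‖g y‖ₑ ∂volume := by
  rw [avg, vol, enorm_mul, laverage_eq, Measure.restrict_apply_univ, volume_toSet,
    Real.enorm_of_nonneg (inv_nonneg.mpr (pow_pos R.side_pos d).le),
    ENNReal.ofReal_inv_of_pos (pow_pos R.side_pos d), ENNReal.ofReal_pow R.side_pos.le,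
    ENNReal.div_eq_inv_mul]
  gcongr
  exact enorm_integral_le_lintegral_enorm _

theorem avg_sub_const (R : Cube d) {g : Euc d → ℝ} (hg : IntegrableOn g R.toSet) (m : ℝ) :
    R.avg (fun y => g y - m) = R.avg g - m := by
  have hR : volume R.toSet ≠ ⊤ := by simp [volume_toSet]
  rw [avg, avg, integral_sub hg (integrableOn_const hR), setIntegral_const, measureReal_def,
    volume_toSet, ← ENNReal.ofReal_pow R.side_pos.le,
    ENNReal.toReal_ofReal (pow_pos R.side_pos d).le, smul_eq_mul, mul_sub, vol, inv_mul_cancel_left₀ (pow_pos R.side_pos d).ne']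

theorem ofReal_abs_avg_sub_rpow_le (R : Cube d) {g : Euc d → ℝ} (hg : IntegrableOn g R.toSet)
    (m : ℝ) {r : ℝ} (hr : 1 ≤ r) :
    ENNReal.ofReal |R.avg g - m| ^ r ≤
      3 ^ d * (scale 3 R).elavg fun y => ENNReal.ofReal |g y - m| ^ r := by
  have hR : volume R.toSet ≠ ⊤ := by simp [volume_toSet]
  have : IsFiniteMeasure (volume.restrict R.toSet) := isFiniteMeasure_restrict.mpr hR
  have h3 : (3 : ℝ≥0∞) ^ d ≠ 0 := by simp
  calc ENNReal.ofReal |R.avg g - m| ^ r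
      = ‖R.avg fun y => g y - m‖ₑ ^ r := by rw [avg_sub_const R hg, Real.enorm_eq_ofReal_abs]
    _ ≤ (⨍⁻ y in R.toSet, ‖g y - m‖ₑ ∂volume) ^ r := by gcongr; exact enorm_avg_le R _
    _ ≤ ⨍⁻ y in R.toSet, ‖g y - m‖ₑ ^ r ∂volume :=
      rpow_laverage_le_laverage_rpow (hg.aemeasurable.sub_const m).enorm hr
    _ = (∫⁻ y in R.toSet, ENNReal.ofReal |g y - m| ^ r) / volume R.toSet := by
      simp only [laverage_eq, Measure.restrict_apply_univ, Real.enorm_eq_ofReal_abs]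
    _ ≤ (∫⁻ y in (scale 3 R).toSet, ENNReal.ofReal |g y - m| ^ r) / volume R.toSet := by
      gcongr; exact toSet_subset_scale (by norm_num) R
    _ = 3 ^ d * (scale 3 R).elavg fun y => ENNReal.ofReal |g y - m| ^ r := by
      rw [elavg_eq_setLAverage, laverage_eq, Measure.restrict_apply_univ,
        volume_scale 3 (by norm_num), ENNReal.ofReal_ofNat, volume_toSet, mul_div_assoc',
        ENNReal.mul_div_mul_left _ _ h3 (by simp)]

theorem setLIntegral_scale_three_le (R : Cube d) {g : Euc d → ℝ} (hg : IntegrableOn g R.toSet)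
    (a : ℝ) {r : ℝ} (hr : 1 ≤ r) :
    ∫⁻ y in (scale 3 R).toSet, ENNReal.ofReal |g y - a| ^ r ≤
      4 ^ r * (3 ^ d + 1) *
        (ENNReal.ofReal |a - R.avg g| ^ r +
          (scale 3 R).elavg fun y => ENNReal.ofReal |g y - (scale 3 R).avg g| ^ r) *
        volume (scale 3 R).toSet := by
  set T := scale 3 R
  set V := volume T.toSet
  have hE : ∫⁻ y in T.toSet, ENNReal.ofReal |g y - T.avg g| ^ r =
      (T.elavg fun y => ENNReal.ofReal |g y - T.avg g| ^ r) * V := by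
    rw [elavg_eq_setLAverage, laverage_eq, Measure.restrict_apply_univ,
      ENNReal.div_mul_cancel (by simp [volume_toSet, T.side_pos]) (by simp [volume_toSet])]
  have h4 : (2 : ℝ≥0∞) ^ r * 2 ^ r = 4 ^ r := by
    rw [← ENNReal.mul_rpow_of_nonneg _ _ (by linarith)]; norm_num
  set E := T.elavg fun y => ENNReal.ofReal |g y - T.avg g| ^ r
  calc ∫⁻ y in T.toSet, ENNReal.ofReal |g y - a| ^ r
      ≤ 2 ^ r * (ENNReal.ofReal |a - R.avg g| ^ r * V +
          2 ^ r * (ENNReal.ofReal |R.avg g - T.avg g| ^ r * V + E * V)) := by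
        refine (setLIntegral_abs_sub_rpow_le _ _ g a (R.avg g) hr).trans ?_
        gcongr
        exact hE ▸ setLIntegral_abs_sub_rpow_le _ _ g _ _ hr
    _ ≤ 2 ^ r * (ENNReal.ofReal |a - R.avg g| ^ r * V + 2 ^ r * (3 ^ d * E * V + E * V)) := by
        gcongr
        exact R.ofReal_abs_avg_sub_rpow_le hg _ hr
    _ = 2 ^ r * ENNReal.ofReal |a - R.avg g| ^ r * V + 4 ^ r * (3 ^ d + 1) * E * V := by
        rw [← h4]; ring
    _ ≤ 4 ^ r * (3 ^ d + 1) * ENNReal.ofReal |a - R.avg g| ^ r * V +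
          4 ^ r * (3 ^ d + 1) * E * V := by
        gcongr
        calc (2 : ℝ≥0∞) ^ r ≤ 4 ^ r := by gcongr; norm_num
          _ ≤ 4 ^ r * (3 ^ d + 1) := le_mul_of_one_le_right' le_add_self
    _ = _ := by ring

def shell (Q R : Cube d) (x : Euc d) : Set (Euc d) :=
  Q.toSet ∩ (scale 3 R).toSet ∩ {y | R.side / 2 < dist x y}

theorem measurableSet_shell (Q R : Cube d) (x : Euc d) : MeasurableSet (shell Q R x) :=
  (Q.measurableSet_toSet.inter (scale 3 R).measurableSet_toSet).inter
    (measurableSet_lt measurable_const (measurable_const.dist measurable_id))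

theorem diff_singleton_subset_iUnion_shell {Q : Cube d} {x : Euc d} (hx : x ∈ Q.toSet) :
    Q.toSet \ {x} ⊆ ⋃ j, shell Q (Q.dyadicSub j (Q.dyadicIndex j x)) x := by
  rintro y ⟨hy, hyx⟩
  set δ := min (dist x y) Q.side
  have hδ : 0 < δ := lt_min (dist_pos.mpr (Ne.symm hyx)) Q.side_pos
  obtain ⟨j, hj₁, hj₂⟩ := exists_nat_pow_near
    ((one_le_div hδ).mpr (min_le_right _ _)) one_lt_two
  rw [le_div_iff₀ hδ, ← le_div_iff₀' (by positivity)] at hj₁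
  rw [div_lt_iff₀ hδ, ← div_lt_iff₀' (by positivity)] at hj₂
  have hcoord : ∀ i, |y i - x i| ≤ δ := fun i =>
    le_min ((abs_sub_comm _ _).trans_le (PiLp.dist_apply_le x y i))
      (abs_sub_lt_iff.mpr ⟨by linarith [(hy i).2, (hx i).1], by linarith [(hy i).1, (hx i).2]⟩).le
  refine Set.mem_iUnion.mpr ⟨j, ⟨hy, mem_scale (by norm_num) (mem_dyadicSub_dyadicIndex hx j)
    fun i => ?_⟩, ?_⟩
  · calc |y i - x i| ≤ Q.side / 2 ^ j := (hcoord i).trans hj₁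
      _ = (3 - 1) / 2 * (Q.side / 2 ^ j) := by ring
  · calc Q.side / 2 ^ j / 2 = Q.side / 2 ^ (j + 1) := by ring
      _ < dist x y := hj₂.trans_le (min_le_left _ _)

theorem lintegral_shell_le (Q R : Cube d) (x : Euc d) (f : Euc d → ℝ)
    {e r : ℝ} (he : 0 ≤ e) :
    ∫⁻ y in shell Q R x, ENNReal.ofReal |f x - f y| ^ r / edist x y ^ e ≤
      (ENNReal.ofReal (R.side / 2) ^ e)⁻¹ *
        ∫⁻ y in (scale 3 R).toSet, ENNReal.ofReal |f (Q.reflect y) - f x| ^ r := by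
  have hne : (ENNReal.ofReal (R.side / 2) ^ e)⁻¹ ≠ ⊤ := by
    simp [ENNReal.rpow_eq_zero_iff, R.side_pos]
  calc ∫⁻ y in shell Q R x, ENNReal.ofReal |f x - f y| ^ r / edist x y ^ e
      ≤ ∫⁻ y in shell Q R x,
          (ENNReal.ofReal (R.side / 2) ^ e)⁻¹ * ENNReal.ofReal |f (Q.reflect y) - f x| ^ r := by
        refine setLIntegral_mono' (measurableSet_shell Q R x) fun y hy => ?_
        rw [reflect_of_mem hy.1.1, abs_sub_comm, div_eq_mul_inv, mul_comm]
        gcongr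
        rw [edist_dist]
        exact ENNReal.ofReal_le_ofReal hy.2.le
    _ ≤ (ENNReal.ofReal (R.side / 2) ^ e)⁻¹ *
          ∫⁻ y in (scale 3 R).toSet, ENNReal.ofReal |f (Q.reflect y) - f x| ^ r := by
        rw [lintegral_const_mul' _ _ hne]
        gcongr
        exact Set.inter_subset_left.trans Set.inter_subset_right

def pointOsc (s r : ℝ) (f : Euc d → ℝ) (x : Euc d) (R : Cube d) : ℝ≥0∞ :=
  ENNReal.ofReal R.side ^ (-(s * r)) * ENNReal.ofReal |f x - R.avg f| ^ r

def meanOsc (Q : Cube d) (s r : ℝ) (f : Euc d → ℝ) (R : Cube d) : ℝ≥0∞ :=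
  ENNReal.ofReal R.side ^ (-(s * r)) *
    (scale 3 R).elavg fun y =>
      ENNReal.ofReal |f (Q.reflect y) - (scale 3 R).avg (fun z => f (Q.reflect z))| ^ r

def shellConst (d : ℕ) (s r : ℝ) : ℝ≥0∞ := 2 ^ ((d : ℝ) + s * r) * 3 ^ d * (4 ^ r * (3 ^ d + 1))

theorem shellConst_rpow_le {s r : ℝ} (hs : s ≤ 1) (hr : 1 ≤ r) :
    shellConst d s r ^ (1 / r) ≤ 16 * 18 ^ d := by
  have hr₀ : 0 < r := zero_lt_one.trans_le hr
  have hle : shellConst d s r ≤ 2 * 18 ^ d * 8 ^ r := by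
    have h2 : (2 : ℝ≥0∞) ^ ((d : ℝ) + s * r) ≤ 2 ^ d * 2 ^ r := by
      rw [ENNReal.rpow_add _ _ two_ne_zero ENNReal.ofNat_ne_top, ENNReal.rpow_natCast]
      gcongr
      · exact one_le_two
      · nlinarith
    have h3 : (3 : ℝ≥0∞) ^ d + 1 ≤ 2 * 3 ^ d := by
      rw [two_mul]; gcongr; exact one_le_pow₀ (by norm_num)
    have h8 : (2 : ℝ≥0∞) ^ r * 4 ^ r = 8 ^ r := by
      rw [← ENNReal.mul_rpow_of_nonneg _ _ hr₀.le]; norm_num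
    have h18 : (2 : ℝ≥0∞) ^ d * 3 ^ d * 3 ^ d = 18 ^ d := by
      rw [← mul_pow, ← mul_pow]; norm_num
    calc shellConst d s r ≤ 2 ^ d * 2 ^ r * 3 ^ d * (4 ^ r * (2 * 3 ^ d)) := by
          unfold shellConst; gcongr
      _ = 2 * (2 ^ d * 3 ^ d * 3 ^ d) * (2 ^ r * 4 ^ r) := by ring
      _ = 2 * 18 ^ d * 8 ^ r := by rw [h8, h18]
  calc shellConst d s r ^ (1 / r) ≤ (2 * 18 ^ d * 8 ^ r) ^ (1 / r) := by gcongr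
    _ = (2 * 18 ^ d) ^ (1 / r) * 8 := by
      rw [ENNReal.mul_rpow_of_nonneg _ _ (by positivity), ← ENNReal.rpow_mul,
        mul_one_div_cancel hr₀.ne', ENNReal.rpow_one]
    _ ≤ 2 * 18 ^ d * 8 := by
      gcongr
      calc (2 * 18 ^ d : ℝ≥0∞) ^ (1 / r) ≤ (2 * 18 ^ d) ^ (1 : ℝ) :=
            ENNReal.rpow_le_rpow_of_exponent_le
              (one_le_two.trans (le_mul_of_one_le_right' (one_le_pow₀ (by norm_num))))
              ((div_le_one hr₀).mpr hr)
        _ = 2 * 18 ^ d := ENNReal.rpow_one _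
    _ = 16 * 18 ^ d := by ring

theorem lintegral_shell_le_shellConst_mul {Q R : Cube d} {x : Euc d} {s r : ℝ} (hs : 0 ≤ s)
    (hr : 1 ≤ r) (hRQ : R.toSet ⊆ Q.toSet) {f : Euc d → ℝ} (hf : IntegrableOn f Q.toSet) :
    ∫⁻ y in shell Q R x, ENNReal.ofReal |f x - f y| ^ r / edist x y ^ ((d : ℝ) + s * r) ≤
      shellConst d s r * (pointOsc s r f x R + meanOsc Q s r f R) := by
  have hrefl := eqOn_comp_reflect hRQ f
  have hF : IntegrableOn (fun y => f (Q.reflect y)) R.toSet :=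
    (hf.mono_set hRQ).congr_fun hrefl.symm R.measurableSet_toSet
  have havg : R.avg (fun y => f (Q.reflect y)) = R.avg f := by
    rw [avg, avg, setIntegral_congr_fun R.measurableSet_toSet hrefl]
  set κ := (ENNReal.ofReal (R.side / 2) ^ ((d : ℝ) + s * r))⁻¹
  set E := (scale 3 R).elavg fun y =>
    ENNReal.ofReal |f (Q.reflect y) - (scale 3 R).avg (fun z => f (Q.reflect z))| ^ r
  calc ∫⁻ y in shell Q R x, ENNReal.ofReal |f x - f y| ^ r / edist x y ^ ((d : ℝ) + s * r)
      ≤ κ * ∫⁻ y in (scale 3 R).toSet, ENNReal.ofReal |f (Q.reflect y) - f x| ^ r :=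
        lintegral_shell_le Q R x f (by positivity)
    _ ≤ κ * (4 ^ r * (3 ^ d + 1) * (ENNReal.ofReal |f x - R.avg f| ^ r + E) *
          volume (scale 3 R).toSet) := by
        rw [← havg]
        gcongr
        exact R.setLIntegral_scale_three_le hF (f x) hr
    _ = κ * ENNReal.ofReal R.side ^ d * 3 ^ d * (4 ^ r * (3 ^ d + 1)) *
          (ENNReal.ofReal |f x - R.avg f| ^ r + E) := by
        rw [volume_scale 3 (by norm_num), ENNReal.ofReal_ofNat]
        ring
    _ = shellConst d s r * (pointOsc s r f x R + meanOsc Q s r f R) := by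
        rw [ENNReal.inv_ofReal_half_rpow_mul_pow R.side_pos d (by positivity), shellConst,
          pointOsc, meanOsc]
        ring

/-- `∑_{R ∈ 𝒟(Q)} G(R) 1_R(x)`. -/
def dyadicSum (Q : Cube d) (G : Cube d → ℝ≥0∞) (x : Euc d) : ℝ≥0∞ :=
  ∑' j : ℕ, ∑ k : Fin d → Fin (2 ^ j),
    G (Q.dyadicSub j fun i => k i) * (Q.dyadicSub j fun i => k i).toSet.indicator (fun _ => 1) x

theorem tsum_le_dyadicSum {Q : Cube d} {x : Euc d} (hx : x ∈ Q.toSet) (G : Cube d → ℝ≥0∞) :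
    ∑' j, G (Q.dyadicSub j (Q.dyadicIndex j x)) ≤ dyadicSum Q G x :=
  ENNReal.tsum_le_tsum fun j => by
    obtain ⟨k, hk⟩ : ∃ k : Fin d → Fin (2 ^ j), (fun i => (k i : ℕ)) = Q.dyadicIndex j x :=
      ⟨fun i => ⟨_, dyadicIndex_lt hx j i⟩, rfl⟩
    calc G (Q.dyadicSub j (Q.dyadicIndex j x))
        = G (Q.dyadicSub j fun i => k i) *
            (Q.dyadicSub j fun i => k i).toSet.indicator (fun _ => 1) x := by
          rw [hk, Set.indicator_of_mem (mem_dyadicSub_dyadicIndex hx j), mul_one]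
      _ ≤ _ := Finset.single_le_sum (f := fun k : Fin d → Fin (2 ^ j) =>
          G (Q.dyadicSub j fun i => k i) *
            (Q.dyadicSub j fun i => k i).toSet.indicator (fun _ => 1) x)
        (fun _ _ => zero_le) (Finset.mem_univ k)

theorem fsr_le_dyadicSum {Q : Cube d} {s r : ℝ} (hs : 0 ≤ s) (hs₁ : s ≤ 1) (hr : 1 ≤ r)
    {f : Euc d → ℝ} (hf : IntegrableOn f Q.toSet) {x : Euc d} (hx : x ∈ Q.toSet) :
    fsr Q.toSet s r f x ≤ ENNReal.ofReal (16 * 18 ^ d) *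
      (dyadicSum Q (pointOsc s r f x) x ^ (1 / r) + dyadicSum Q (meanOsc Q s r f) x ^ (1 / r)) := by
  have hr₀ : 0 < r := zero_lt_one.trans_le hr
  set A := dyadicSum Q (pointOsc s r f x) x
  set B := dyadicSum Q (meanOsc Q s r f) x
  have hint : ∫⁻ y in Q.toSet, ENNReal.ofReal |f x - f y| ^ r / edist x y ^ ((d : ℝ) + s * r) ≤
      shellConst d s r * (A + B) :=
    calc ∫⁻ y in Q.toSet, ENNReal.ofReal |f x - f y| ^ r / edist x y ^ ((d : ℝ) + s * r)
        ≤ ∑' j, ∫⁻ y in shell Q (Q.dyadicSub j (Q.dyadicIndex j x)) x,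
            ENNReal.ofReal |f x - f y| ^ r / edist x y ^ ((d : ℝ) + s * r) :=
          setLIntegral_le_tsum_of_diff_singleton_subset (by simp [ENNReal.zero_rpow_of_pos hr₀])
            (diff_singleton_subset_iUnion_shell hx)
      _ ≤ ∑' j, shellConst d s r * (pointOsc s r f x (Q.dyadicSub j (Q.dyadicIndex j x)) +
            meanOsc Q s r f (Q.dyadicSub j (Q.dyadicIndex j x))) :=
          ENNReal.tsum_le_tsum fun j =>
            lintegral_shell_le_shellConst_mul hs hr (dyadicSub_subset (dyadicIndex_lt hx j)) hf
      _ ≤ shellConst d s r * (A + B) := by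
          rw [ENNReal.tsum_mul_left, ENNReal.tsum_add]
          gcongr <;> exact tsum_le_dyadicSum hx _
  calc fsr Q.toSet s r f x ≤ (shellConst d s r * (A + B)) ^ (1 / r) :=
        ENNReal.rpow_le_rpow hint (by positivity)
    _ = shellConst d s r ^ (1 / r) * (A + B) ^ (1 / r) :=
        ENNReal.mul_rpow_of_nonneg _ _ (by positivity)
    _ ≤ ENNReal.ofReal (16 * 18 ^ d) * (A ^ (1 / r) + B ^ (1 / r)) := by
        gcongr
        · rw [ENNReal.ofReal_mul (by norm_num), ENNReal.ofReal_pow (by norm_num),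
            ENNReal.ofReal_ofNat, ENNReal.ofReal_ofNat]
          exact shellConst_rpow_le hs₁ hr
        · exact ENNReal.rpow_add_le_add_rpow _ _ (by positivity) ((div_le_one hr₀).mpr hr)

end Cube

/-- Lemma 3.2: pointwise dyadic domination of the fractional
difference quotient: for `f ∈ F^s_{1,r}(Q)` and a.e. `x ∈ Q`,
`f^{s,r}_Q(x) ≤ C_d [(∑_{R∈𝒟(Q)} ℓ(R)^{-sr} |f(x)-⟨f⟩_R|^r 1_R(x))^{1/r}
  + (∑_{R∈𝒟(Q)} ℓ(R)^{-sr} ⟨|f-⟨f⟩_{3R}|⟩_{r,3R}^r 1_R(x))^{1/r}]`. -/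
theorem dyadic_domination_fsr (d : ℕ) :
    ∃ C : ℝ, 0 < C ∧
      ∀ (Q : Cube d) (s r : ℝ), 0 < s → s < 1 → 1 ≤ r →
      ∀ f : Euc d → ℝ, Measurable f → IntegrableOn f Q.toSet →
        (∫⁻ x in Q.toSet, fsr Q.toSet s r f x) ≠ ⊤ →
        ∀ᵐ x ∂(volume.restrict Q.toSet),
          fsr Q.toSet s r f x ≤
            ENNReal.ofReal C *
              ((∑' j : ℕ, ∑ k : Fin d → Fin (2 ^ j),
                  (fun R : Cube d =>
                      ENNReal.ofReal R.side ^ (-(s * r)) *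
                        ENNReal.ofReal |f x - R.avg f| ^ r *
                        R.toSet.indicator (fun _ => (1 : ℝ≥0∞)) x)
                    (Q.dyadicSub j fun i => (k i : ℕ))) ^ (1 / r) +
                (∑' j : ℕ, ∑ k : Fin d → Fin (2 ^ j),
                  (fun R : Cube d =>
                      ENNReal.ofReal R.side ^ (-(s * r)) *
                        (Cube.scale 3 R).elavg (fun y =>
                          ENNReal.ofReal
                            |f (Q.reflect y) -
                              (Cube.scale 3 R).avg (fun z => f (Q.reflect z))| ^ r) *
                        R.toSet.indicator (fun _ => (1 : ℝ≥0∞)) x)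
                    (Q.dyadicSub j fun i => (k i : ℕ))) ^ (1 / r)) := by
  refine ⟨16 * 18 ^ d, by positivity, fun Q s r hs hs₁ hr f _ hf _ => ?_⟩
  filter_upwards [ae_restrict_mem Q.measurableSet_toSet] with x hx
  exact Cube.fsr_le_dyadicSum hs.le hs₁.le hr hf hx
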